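/- In dimension 3, the Apollonian group generators satisfy (S_j S_k)³ = I_5 for all j ≠ k, 1 ≤ j, k ≤ 5. -/
import Mathlib


open Matrix

/-- Descartes quadratic form matrix in dimension `n`. -/
noncomputable def QD (n : ℕ) : Matrix (Fin (n+2)) (Fin (n+2)) ℝ :=
  1 - (n : ℝ)⁻¹ • Matrix.of (fun _ _ => (1 : ℝ))

/-- Wilker quadratic form matrix in dimension `n`. -/
def QW (n : ℕ) : Matrix (Fin (n+2)) (Fin (n+2)) ℝ :=
  Matrix.of (fun i j =>
    if (i = 0 ∧ j = 1) ∨ (i = 1 ∧ j = 0) then (-4 : ℝ)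
    else if i = j then (if 2 ≤ (i : ℕ) then 2 else 0) else 0)

/-- Apollonian group generator `S j` in dimension `n`. -/
noncomputable def S (n : ℕ) (j : Fin (n+2)) : Matrix (Fin (n+2)) (Fin (n+2)) ℝ :=
  Matrix.of (fun i k =>
    if i = j then (if k = j then -1 else 2 / ((n : ℝ) - 1))
    else if i = k then 1 else 0)

/-- Dual Apollonian group generator `S j ^⊥` in dimension `n`. -/
def Sperp (n : ℕ) (j : Fin (n+2)) : Matrix (Fin (n+2)) (Fin (n+2)) ℝ :=
  Matrix.of (fun i k =>
    if k = j then (if i = j then -1 else 2)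
    else if i = k then 1 else 0)

/-- row matrix: row `p` is `w`, other rows zero. -/
def E (p : Fin 5) (w : Fin 5 → ℝ) : Matrix (Fin 5) (Fin 5) ℝ :=
  Matrix.of (fun i l => if i = p then w l else 0)

lemma mulE (p q : Fin 5) (w w' : Fin 5 → ℝ) : E p w * E q w' = w q • E p w' := by
  ext i l
  rcases eq_or_ne i p with h | h <;>
    simp [E, Matrix.mul_apply, h, mul_ite, Finset.sum_ite_eq']

def u (p : Fin 5) : Fin 5 → ℝ := fun l => if l = p then -2 else 1

lemma hS (p : Fin 5) : S 3 p = 1 + E p (u p) := by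
  ext i l
  rcases eq_or_ne i p with h1 | h1 <;> rcases eq_or_ne i l with h2 | h2 <;>
    simp [S, E, u, Matrix.one_apply, h1, h2] <;> subst_vars <;>
    simp_all [eq_comm] <;> norm_num

theorem dim3_braid_relation (j k : Fin 5) (hjk : j ≠ k) :
    (S 3 j * S 3 k) ^ 3 = 1 := by
  have hkj : k ≠ j := hjk.symm
  set a := E j (u j) with ha
  set b := E k (u k) with hb
  set c := E j (u k) with hc
  set d := E k (u j) with hd
  have ujj : u j j = -2 := by simp [u]
  have ukk : u k k = -2 := by simp [u]
  have ujk : u j k = 1 := by simp [u, hkj]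
  have ukj : u k j = 1 := by simp [u, hjk]
  have n2 : ∀ m : Matrix (Fin 5) (Fin 5) ℝ, (-2 : ℝ) • m = -(m + m) := by
    intro m; rw [neg_smul, two_smul]
  have haa : a * a = -(a + a) := by rw [ha, mulE, ujj, n2]
  have hab : a * b = c := by rw [ha, hb, mulE, ujk, one_smul, ← hc]
  have hac : a * c = -(c + c) := by rw [ha, hc, mulE, ujj, n2]
  have had : a * d = a := by rw [ha, hd, mulE, ujk, one_smul, ← ha]
  have hba : b * a = d := by rw [hb, ha, mulE, ukj, one_smul, ← hd]
  have hbb : b * b = -(b + b) := by rw [hb, mulE, ukk, n2]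
  have hbc : b * c = b := by rw [hb, hc, mulE, ukj, one_smul, ← hb]
  have hbd : b * d = -(d + d) := by rw [hb, hd, mulE, ukk, n2]
  have hca : c * a = a := by rw [hc, ha, mulE, ukj, one_smul, ← ha]
  have hcb : c * b = -(c + c) := by rw [hc, hb, mulE, ukk, n2]
  have hcc : c * c = c := by rw [hc, mulE, ukj, one_smul]
  have hda : d * a = -(d + d) := by rw [hd, ha, mulE, ujj, n2]
  have hdb : d * b = b := by rw [hd, hb, mulE, ujk, one_smul, ← hb]
  have hdc : d * c = -(b + b) := by rw [hd, hc, mulE, ujj, ← hb, n2]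
  have step1 : S 3 j * S 3 k = 1 + a + b + c := by
    rw [hS j, hS k, ← ha, ← hb]
    simp only [mul_add, add_mul, one_mul, mul_one, hab]
    abel
  have step2 : (1 + a + b + c) * (1 + a + b + c) = 1 + a + b + d := by
    simp only [mul_add, add_mul, one_mul, mul_one, haa, hab, hac, hba, hbb, hbc,
      hca, hcb, hcc]
    abel
  have step3 : (1 + a + b + d) * (1 + a + b + c) = 1 := by
    simp only [mul_add, add_mul, one_mul, mul_one, haa, hab, hac, hba, hbb, hbc,
      hda, hdb, hdc]
    abel
  rw [pow_succ, pow_two, step1, step2, step3]
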